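/- arXiv:2011.01033 — 2 statements merged into one kernel-verified Lean document; each statement's English description precedes it below -/
import Mathlib

section
/- Let a'₁, a'₂, a'₃ be positive integers and let G be a finite subgroup of the diagonal torus {diag(g₁,g₂,g₃) : gᵢ ∈ ℂ^×, g₁g₂g₃ = 1} ⊂ SL(3,ℂ) such that gᵢ^{a'ᵢ} = 1 for every diag(g₁,g₂,g₃) ∈ G (equivalently, G leaves the cusp polynomial x₁^{a'₁}+x₂^{a'₂}+x₃^{a'₃} − c⁻¹x₁x₂x₃ invariant). For i = 1,2,3 let nᵢ be the number of elements g ∈ G whose i-th diagonal entry equals 1, and for g ∈ G of order r, writing gᵢ = exp(2π√−1·kᵢ/r) with 0 ≤ kᵢ < r, set age(g) := (k₁+k₂+k₃)/r (an integer, since g₁g₂g₃ = 1). Let j_G be the number of elements g ∈ G with age(g) = 1 whose fixed subspace in ℂ³ is {0} (i.e. all three kᵢ are nonzero). Then |G| = 1 + 2·j_G + (n₁ − 1) + (n₂ − 1) + (n₃ − 1). -/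
noncomputable section

open Complex

private lemma exp_frac_inj {n k k' : ℕ} (hk : k < n) (hk' : k' < n)
    (h : Complex.exp (2 * (Real.pi : ℂ) * Complex.I * ((k : ℂ) / n)) =
         Complex.exp (2 * (Real.pi : ℂ) * Complex.I * ((k' : ℂ) / n))) : k = k' := by
  obtain ⟨m, hm⟩ := Complex.exp_eq_exp_iff_exists_int.mp h
  have hn : (n : ℂ) ≠ 0 := Nat.cast_ne_zero.mpr (by omega)
  have h2 : (k : ℂ) = (k' : ℂ) + m * n := by
    have : 2 * (Real.pi : ℂ) * Complex.I * ((k : ℂ) / n) =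
        2 * (Real.pi : ℂ) * Complex.I * ((k' : ℂ) / n + m) := by
      rw [hm]; ring
    have := mul_left_cancel₀ Complex.two_pi_I_ne_zero this
    field_simp at this
    linear_combination this
  have h3 : (k : ℤ) = (k' : ℤ) + m * n := by exact_mod_cast h2
  have hm0 : m = 0 := by
    rcases lt_trichotomy m 0 with h | h | h
    · nlinarith [h3, Int.ofNat_lt.mpr hk, Int.ofNat_lt.mpr hk']
    · exact h
    · nlinarith [h3, Int.ofNat_lt.mpr hk, Int.ofNat_lt.mpr hk']
  rw [hm0, zero_mul, add_zero] at h3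
  exact_mod_cast h3

private lemma exists_exp_rep (z : ℂˣ) {n : ℕ} (hn : n ≠ 0) (hz : z ^ n = 1) :
    ∃ k < n, (z : ℂ) = Complex.exp (2 * (Real.pi : ℂ) * Complex.I * ((k : ℂ) / n)) := by
  have : NeZero n := ⟨hn⟩
  have hmem : z ∈ rootsOfUnity n ℂ := by rwa [_root_.mem_rootsOfUnity]
  obtain ⟨k, hk, hk2⟩ := (Complex.mem_rootsOfUnity n z).mp hmem
  exact ⟨k, hk, hk2.symm⟩

/-- age-m elements with all coordinates nontrivial. -/
private def AgeK (g : ℂˣ × ℂˣ × ℂˣ) (m : ℕ) : Prop :=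
  ∃ k : Fin 3 → ℕ, (∀ i, k i < orderOf g) ∧ (∀ i, k i ≠ 0) ∧
    k 0 + k 1 + k 2 = m * orderOf g ∧
    ((g.1 : ℂ) = Complex.exp (2 * (Real.pi : ℂ) * Complex.I * ((k 0 : ℂ) / (orderOf g : ℂ)))) ∧
    ((g.2.1 : ℂ) = Complex.exp (2 * (Real.pi : ℂ) * Complex.I * ((k 1 : ℂ) / (orderOf g : ℂ)))) ∧
    ((g.2.2 : ℂ) = Complex.exp (2 * (Real.pi : ℂ) * Complex.I * ((k 2 : ℂ) / (orderOf g : ℂ))))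

private lemma ageK_ne_one {g : ℂˣ × ℂˣ × ℂˣ} {m : ℕ} (h : AgeK g m) :
    g.1 ≠ 1 ∧ g.2.1 ≠ 1 ∧ g.2.2 ≠ 1 := by
  obtain ⟨k, hlt, hne, _, e0, e1, e2⟩ := h
  have key : ∀ (z : ℂˣ) (i : Fin 3),
      (z : ℂ) = Complex.exp (2 * (Real.pi : ℂ) * Complex.I * ((k i : ℂ) / (orderOf g : ℂ))) →
      z ≠ 1 := by
    intro z i hz h1
    subst h1
    apply hne i
    have h0 : ((1 : ℂˣ) : ℂ) =
        Complex.exp (2 * (Real.pi : ℂ) * Complex.I * (((0:ℕ) : ℂ) / (orderOf g : ℂ))) := by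
      simp
    exact exp_frac_inj (hlt i) (lt_of_le_of_lt (Nat.zero_le _) (hlt i)) (hz.symm.trans h0)
  exact ⟨key g.1 0 e0, key g.2.1 1 e1, key g.2.2 2 e2⟩

private lemma ageK_not_both {g : ℂˣ × ℂˣ × ℂˣ} (h1 : AgeK g 1) (h2 : AgeK g 2) : False := by
  obtain ⟨k, hlt, hne, hsum, e0, e1, e2⟩ := h1
  obtain ⟨k', hlt', hne', hsum', e0', e1', e2'⟩ := h2
  have r0 : k 0 = k' 0 := exp_frac_inj (hlt 0) (hlt' 0) (e0.symm.trans e0')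
  have r1 : k 1 = k' 1 := exp_frac_inj (hlt 1) (hlt' 1) (e1.symm.trans e1')
  have r2 : k 2 = k' 2 := exp_frac_inj (hlt 2) (hlt' 2) (e2.symm.trans e2')
  have : 0 < orderOf g := lt_of_le_of_lt (Nat.zero_le _) (hlt 0)
  omega

private lemma ageK_inv {g : ℂˣ × ℂˣ × ℂˣ} {m : ℕ} (hm : m = 1 ∨ m = 2) (h : AgeK g m) :
    AgeK g⁻¹ (3 - m) := by
  obtain ⟨k, hlt, hne, hsum, e0, e1, e2⟩ := h
  set r := orderOf g with hr
  have hr0 : 0 < r := lt_of_le_of_lt (Nat.zero_le _) (hlt 0)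
  have hrinv : orderOf g⁻¹ = r := orderOf_inv g
  have key : ∀ (z : ℂˣ) (i : Fin 3),
      (z : ℂ) = Complex.exp (2 * (Real.pi : ℂ) * Complex.I * ((k i : ℂ) / (r : ℂ))) →
      ((z⁻¹ : ℂˣ) : ℂ) =
        Complex.exp (2 * (Real.pi : ℂ) * Complex.I * (((r - k i : ℕ) : ℂ) / (r : ℂ))) := by
    intro z i hz
    have hcast : ((r - k i : ℕ) : ℂ) = (r : ℂ) - (k i : ℂ) := by
      have := (hlt i).le
      push_cast [Nat.cast_sub this]
      ring
    rw [Units.val_inv_eq_inv_val, hz, ← Complex.exp_neg, hcast]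
    have hrc : (r : ℂ) ≠ 0 := Nat.cast_ne_zero.mpr hr0.ne'
    rw [show 2 * (Real.pi : ℂ) * Complex.I * (((r : ℂ) - (k i : ℂ)) / (r : ℂ)) =
        2 * (Real.pi : ℂ) * Complex.I + -(2 * (Real.pi : ℂ) * Complex.I * ((k i : ℂ) / (r : ℂ))) by
      field_simp; ring]
    rw [Complex.exp_add, Complex.exp_two_pi_mul_I, one_mul]
  refine ⟨fun i => r - k i, ?_, ?_, ?_, ?_, ?_, ?_⟩
  · intro i
    show r - k i < orderOf g⁻¹
    rw [hrinv]; have := hne i; omega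
  · intro i
    show r - k i ≠ 0
    have := hlt i; omega
  · show (r - k 0) + (r - k 1) + (r - k 2) = (3 - m) * orderOf g⁻¹
    rw [hrinv]
    have h0 := hlt 0; have h1 := hlt 1; have h2 := hlt 2
    rcases hm with rfl | rfl <;> omega
  · show ((g.1⁻¹ : ℂˣ) : ℂ) = Complex.exp (2 * (Real.pi : ℂ) * Complex.I *
      (((r - k 0 : ℕ) : ℂ) / (orderOf g⁻¹ : ℂ)))
    rw [hrinv]; exact key g.1 0 e0
  · show ((g.2.1⁻¹ : ℂˣ) : ℂ) = Complex.exp (2 * (Real.pi : ℂ) * Complex.I *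
      (((r - k 1 : ℕ) : ℂ) / (orderOf g⁻¹ : ℂ)))
    rw [hrinv]; exact key g.2.1 1 e1
  · show ((g.2.2⁻¹ : ℂˣ) : ℂ) = Complex.exp (2 * (Real.pi : ℂ) * Complex.I *
      (((r - k 2 : ℕ) : ℂ) / (orderOf g⁻¹ : ℂ)))
    rw [hrinv]; exact key g.2.2 2 e2

private lemma ageK_total {g : ℂˣ × ℂˣ × ℂˣ} (hr : orderOf g ≠ 0)
    (hdet : (g.1 : ℂ) * (g.2.1 : ℂ) * (g.2.2 : ℂ) = 1)
    (h1 : g.1 ≠ 1) (h2 : g.2.1 ≠ 1) (h3 : g.2.2 ≠ 1) :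
    AgeK g 1 ∨ AgeK g 2 := by
  set r := orderOf g with hrdef
  have hgr : g ^ r = 1 := pow_orderOf_eq_one g
  have hz1 : g.1 ^ r = 1 := by rw [← Prod.pow_fst, hgr]; rfl
  have hz2 : g.2.1 ^ r = 1 := by
    have : (g ^ r).2.1 = (1 : ℂˣ × ℂˣ × ℂˣ).2.1 := by rw [hgr]
    simpa [Prod.pow_snd, Prod.pow_fst] using this
  have hz3 : g.2.2 ^ r = 1 := by
    have : (g ^ r).2.2 = (1 : ℂˣ × ℂˣ × ℂˣ).2.2 := by rw [hgr]
    simpa [Prod.pow_snd] using this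
  obtain ⟨k0, hk0, e0⟩ := exists_exp_rep g.1 hr hz1
  obtain ⟨k1, hk1, e1⟩ := exists_exp_rep g.2.1 hr hz2
  obtain ⟨k2, hk2, e2⟩ := exists_exp_rep g.2.2 hr hz3
  have hrc : (r : ℂ) ≠ 0 := Nat.cast_ne_zero.mpr hr
  have hne : ∀ (z : ℂˣ) (kk : ℕ), (z : ℂ) =
      Complex.exp (2 * (Real.pi : ℂ) * Complex.I * ((kk : ℂ) / (r : ℂ))) → z ≠ 1 → kk < r → kk ≠ 0 := by
    rintro z kk hz hzne hkk rfl
    apply hzne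
    apply Units.ext
    rw [hz]; simp
  have hk0' := hne g.1 k0 e0 h1 hk0
  have hk1' := hne g.2.1 k1 e1 h2 hk1
  have hk2' := hne g.2.2 k2 e2 h3 hk2
  -- the sum is divisible by r
  have hprod : Complex.exp (2 * (Real.pi : ℂ) * Complex.I * (((k0 + k1 + k2 : ℕ) : ℂ) / (r : ℂ))) = 1 := by
    rw [← hdet, e0, e1, e2, ← Complex.exp_add, ← Complex.exp_add]
    congr 1
    push_cast
    ring
  obtain ⟨m, hm⟩ := Complex.exp_eq_one_iff.mp hprod
  have hmc : ((k0 + k1 + k2 : ℕ) : ℂ) = m * r := by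
    have : 2 * (Real.pi : ℂ) * Complex.I * (((k0 + k1 + k2 : ℕ) : ℂ) / (r : ℂ)) =
        2 * (Real.pi : ℂ) * Complex.I * ((m : ℂ)) := by rw [hm]; ring
    have := mul_left_cancel₀ Complex.two_pi_I_ne_zero this
    field_simp at this
    push_cast at this ⊢
    linear_combination this
  have hmz : (k0 : ℤ) + k1 + k2 = m * r := by exact_mod_cast hmc
  have hrz : (0 : ℤ) < r := by exact_mod_cast Nat.pos_of_ne_zero hr
  have b0 : (1 : ℤ) ≤ k0 := by exact_mod_cast Nat.one_le_iff_ne_zero.mpr hk0'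
  have b1 : (1 : ℤ) ≤ k1 := by exact_mod_cast Nat.one_le_iff_ne_zero.mpr hk1'
  have b2 : (1 : ℤ) ≤ k2 := by exact_mod_cast Nat.one_le_iff_ne_zero.mpr hk2'
  have c0 : (k0 : ℤ) < r := by exact_mod_cast hk0
  have c1 : (k1 : ℤ) < r := by exact_mod_cast hk1
  have c2 : (k2 : ℤ) < r := by exact_mod_cast hk2
  have hm12 : m = 1 ∨ m = 2 := by
    rcases le_or_gt m 0 with h | h
    · exfalso
      have : m * r ≤ 0 := mul_nonpos_of_nonpos_of_nonneg h hrz.le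
      linarith
    · rcases le_or_gt 3 m with h' | h'
      · exfalso
        have : (3 : ℤ) * r ≤ m * r := mul_le_mul_of_nonneg_right h' hrz.le
        linarith
      · omega
  have hk : ∀ mm : ℕ, (m : ℤ) = mm → AgeK g mm := by
    intro mm hmm
    refine ⟨![k0, k1, k2], ?_, ?_, ?_, ?_, ?_, ?_⟩
    · intro i; fin_cases i <;> simpa
    · intro i; fin_cases i <;> simpa
    · simp only [Matrix.cons_val_zero, Matrix.cons_val_one, Matrix.head_cons,
        Matrix.cons_val_two, Matrix.tail_cons]
      have : ((k0 + k1 + k2 : ℕ) : ℤ) = (mm : ℤ) * r := by push_cast; rw [hmz, hmm]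
      exact_mod_cast this
    · simpa using e0
    · simpa using e1
    · simpa using e2
  rcases hm12 with h | h
  · exact Or.inl (hk 1 (by exact_mod_cast h))
  · exact Or.inr (hk 2 (by exact_mod_cast h))

/-- For a finite subgroup `G` of the diagonal torus
`{(g₁,g₂,g₃) : gᵢ ∈ ℂˣ, g₁g₂g₃ = 1} ⊂ SL(3,ℂ)` leaving the cusp polynomial
`x₁^{a₁'} + x₂^{a₂'} + x₃^{a₃'} − c⁻¹x₁x₂x₃` invariant (i.e. `gᵢ^{aᵢ'} = 1` for all members),
one has `|G| = 1 + 2 j_G + (n₁ − 1) + (n₂ − 1) + (n₃ − 1)`, where `nᵢ` is the number of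
elements of `G` whose `i`-th entry is `1`, and `j_G` is the number of elements `g ∈ G`
of age `1` with fixed subspace `{0}` — i.e. writing `gᵢ = exp(2π√-1 kᵢ/r)` with
`0 ≤ kᵢ < r` and `r = ord(g)`, those with `k₁ + k₂ + k₃ = r` and all `kᵢ ≠ 0`. -/
theorem card_symmetry_group_cusp (a : Fin 3 → ℕ) (ha : ∀ i, 0 < a i)
    (G : Subgroup (ℂˣ × ℂˣ × ℂˣ)) [Finite G]
    (hdet : ∀ g ∈ G, ((g.1 : ℂ) * (g.2.1 : ℂ) * (g.2.2 : ℂ) = 1))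
    (hpow : ∀ g ∈ G, g.1 ^ a 0 = 1 ∧ g.2.1 ^ a 1 = 1 ∧ g.2.2 ^ a 2 = 1) :
    (Nat.card G : ℤ) =
      1
      + 2 * (Nat.card {g : G // ∃ k : Fin 3 → ℕ,
          (∀ i, k i < orderOf (g : ℂˣ × ℂˣ × ℂˣ)) ∧ (∀ i, k i ≠ 0) ∧
          k 0 + k 1 + k 2 = orderOf (g : ℂˣ × ℂˣ × ℂˣ) ∧
          (((g : ℂˣ × ℂˣ × ℂˣ).1 : ℂ) =
            Complex.exp (2 * (Real.pi : ℂ) * Complex.I *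
              ((k 0 : ℂ) / (orderOf (g : ℂˣ × ℂˣ × ℂˣ) : ℂ)))) ∧
          (((g : ℂˣ × ℂˣ × ℂˣ).2.1 : ℂ) =
            Complex.exp (2 * (Real.pi : ℂ) * Complex.I *
              ((k 1 : ℂ) / (orderOf (g : ℂˣ × ℂˣ × ℂˣ) : ℂ)))) ∧
          (((g : ℂˣ × ℂˣ × ℂˣ).2.2 : ℂ) =
            Complex.exp (2 * (Real.pi : ℂ) * Complex.I *
              ((k 2 : ℂ) / (orderOf (g : ℂˣ × ℂˣ × ℂˣ) : ℂ))))} : ℤ)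
      + ((Nat.card {g : G // (g : ℂˣ × ℂˣ × ℂˣ).1 = 1} : ℤ) - 1)
      + ((Nat.card {g : G // (g : ℂˣ × ℂˣ × ℂˣ).2.1 = 1} : ℤ) - 1)
      + ((Nat.card {g : G // (g : ℂˣ × ℂˣ × ℂˣ).2.2 = 1} : ℤ) - 1) := by
  classical
  letI : Fintype G := Fintype.ofFinite G
  -- the statement's j-predicate is `AgeK g 1`
  have hpred : ∀ g : G, (∃ k : Fin 3 → ℕ,
      (∀ i, k i < orderOf (g : ℂˣ × ℂˣ × ℂˣ)) ∧ (∀ i, k i ≠ 0) ∧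
      k 0 + k 1 + k 2 = orderOf (g : ℂˣ × ℂˣ × ℂˣ) ∧
      (((g : ℂˣ × ℂˣ × ℂˣ).1 : ℂ) =
        Complex.exp (2 * (Real.pi : ℂ) * Complex.I *
          ((k 0 : ℂ) / (orderOf (g : ℂˣ × ℂˣ × ℂˣ) : ℂ)))) ∧
      (((g : ℂˣ × ℂˣ × ℂˣ).2.1 : ℂ) =
        Complex.exp (2 * (Real.pi : ℂ) * Complex.I *
          ((k 1 : ℂ) / (orderOf (g : ℂˣ × ℂˣ × ℂˣ) : ℂ)))) ∧
      (((g : ℂˣ × ℂˣ × ℂˣ).2.2 : ℂ) =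
        Complex.exp (2 * (Real.pi : ℂ) * Complex.I *
          ((k 2 : ℂ) / (orderOf (g : ℂˣ × ℂˣ × ℂˣ) : ℂ))))) ↔ AgeK (g : ℂˣ × ℂˣ × ℂˣ) 1 := by
    intro g
    unfold AgeK
    simp [one_mul]
  have hdet' : ∀ g : G, (((g : ℂˣ × ℂˣ × ℂˣ).1 : ℂ) * ((g : ℂˣ × ℂˣ × ℂˣ).2.1 : ℂ) *
      ((g : ℂˣ × ℂˣ × ℂˣ).2.2 : ℂ) = 1) := fun g => hdet g g.2
  have horder : ∀ g : G, orderOf (g : ℂˣ × ℂˣ × ℂˣ) ≠ 0 := by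
    intro g
    have h : ((g : ℂˣ × ℂˣ × ℂˣ)) ^ Fintype.card G = 1 := by
      have h1 : ((g ^ Fintype.card G : G) : ℂˣ × ℂˣ × ℂˣ) = ((1 : G) : ℂˣ × ℂˣ × ℂˣ) := by
        rw [pow_card_eq_one]
      push_cast at h1
      simpa using h1
    have : IsOfFinOrder (g : ℂˣ × ℂˣ × ℂˣ) :=
      isOfFinOrder_iff_pow_eq_one.mpr ⟨Fintype.card G, Fintype.card_pos, h⟩
    exact this.orderOf_pos.ne'
  -- if two coordinates are trivial, the element is trivial
  have hcoe1 : ∀ g : G, (g : ℂˣ × ℂˣ × ℂˣ) = 1 → g = 1 := by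
    intro g h
    exact Subtype.ext (by simpa using h)
  have h12 : ∀ g : G, (g : ℂˣ × ℂˣ × ℂˣ).1 = 1 → (g : ℂˣ × ℂˣ × ℂˣ).2.1 = 1 → g = 1 := by
    intro g hA hB
    have hC : (g : ℂˣ × ℂˣ × ℂˣ).2.2 = 1 := by
      apply Units.ext
      have := hdet' g
      rw [hA, hB] at this
      simpa using this
    exact hcoe1 g (by simp only [Prod.ext_iff, Prod.fst_one, Prod.snd_one]; exact ⟨hA, hB, hC⟩)
  have h13 : ∀ g : G, (g : ℂˣ × ℂˣ × ℂˣ).1 = 1 → (g : ℂˣ × ℂˣ × ℂˣ).2.2 = 1 → g = 1 := by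
    intro g hA hC
    have hB : (g : ℂˣ × ℂˣ × ℂˣ).2.1 = 1 := by
      apply Units.ext
      have := hdet' g
      rw [hA, hC] at this
      simpa using this
    exact hcoe1 g (by simp only [Prod.ext_iff, Prod.fst_one, Prod.snd_one]; exact ⟨hA, hB, hC⟩)
  have h23 : ∀ g : G, (g : ℂˣ × ℂˣ × ℂˣ).2.1 = 1 → (g : ℂˣ × ℂˣ × ℂˣ).2.2 = 1 → g = 1 := by
    intro g hB hC
    have hA : (g : ℂˣ × ℂˣ × ℂˣ).1 = 1 := by
      apply Units.ext
      have := hdet' g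
      rw [hB, hC] at this
      simpa using this
    exact hcoe1 g (by simp only [Prod.ext_iff, Prod.fst_one, Prod.snd_one]; exact ⟨hA, hB, hC⟩)
  -- the pointwise classification
  have hclass : ∀ g : G,
      ((if (AgeK (g : ℂˣ × ℂˣ × ℂˣ) 1 ∨ AgeK (g : ℂˣ × ℂˣ × ℂˣ) 2) then 1 else 0)
        + (if (g : ℂˣ × ℂˣ × ℂˣ).1 = 1 then 1 else 0)
        + (if (g : ℂˣ × ℂˣ × ℂˣ).2.1 = 1 then 1 else 0)
        + (if (g : ℂˣ × ℂˣ × ℂˣ).2.2 = 1 then 1 else 0) : ℕ)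
      = 1 + (if g = (1 : G) then 2 else 0) := by
    intro g
    by_cases h0 : g = 1
    · subst h0
      have hq1 : ¬ AgeK ((1 : G) : ℂˣ × ℂˣ × ℂˣ) 1 := fun h => (ageK_ne_one h).1 (by simp)
      have hq2 : ¬ AgeK ((1 : G) : ℂˣ × ℂˣ × ℂˣ) 2 := fun h => (ageK_ne_one h).1 (by simp)
      simp only [OneMemClass.coe_one] at hq1 hq2
      simp [hq1, hq2]
    · by_cases h1 : (g : ℂˣ × ℂˣ × ℂˣ).1 = 1
      · have h2 : ¬ (g : ℂˣ × ℂˣ × ℂˣ).2.1 = 1 := fun h2 => h0 (h12 g h1 h2)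
        have h3 : ¬ (g : ℂˣ × ℂˣ × ℂˣ).2.2 = 1 := fun h3 => h0 (h13 g h1 h3)
        have hq : ¬ (AgeK (g : ℂˣ × ℂˣ × ℂˣ) 1 ∨ AgeK (g : ℂˣ × ℂˣ × ℂˣ) 2) := by
          rintro (h | h) <;> exact (ageK_ne_one h).1 h1
        simp [hq, h1, h2, h3, h0]
      · by_cases h2 : (g : ℂˣ × ℂˣ × ℂˣ).2.1 = 1
        · have h3 : ¬ (g : ℂˣ × ℂˣ × ℂˣ).2.2 = 1 := fun h3 => h0 (h23 g h2 h3)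
          have hq : ¬ (AgeK (g : ℂˣ × ℂˣ × ℂˣ) 1 ∨ AgeK (g : ℂˣ × ℂˣ × ℂˣ) 2) := by
            rintro (h | h) <;> exact (ageK_ne_one h).2.1 h2
          simp [hq, h1, h2, h3, h0]
        · by_cases h3 : (g : ℂˣ × ℂˣ × ℂˣ).2.2 = 1
          · have hq : ¬ (AgeK (g : ℂˣ × ℂˣ × ℂˣ) 1 ∨ AgeK (g : ℂˣ × ℂˣ × ℂˣ) 2) := by
              rintro (h | h) <;> exact (ageK_ne_one h).2.2 h3
            simp [hq, h1, h2, h3, h0]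
          · have hq : AgeK (g : ℂˣ × ℂˣ × ℂˣ) 1 ∨ AgeK (g : ℂˣ × ℂˣ × ℂˣ) 2 :=
              ageK_total (horder g) (hdet' g) h1 h2 h3
            simp [hq, h1, h2, h3, h0]
  -- counting identity (A)
  have hA : (Finset.univ.filter
        (fun g : G => AgeK (g : ℂˣ × ℂˣ × ℂˣ) 1 ∨ AgeK (g : ℂˣ × ℂˣ × ℂˣ) 2)).card
      + (Finset.univ.filter (fun g : G => (g : ℂˣ × ℂˣ × ℂˣ).1 = 1)).card
      + (Finset.univ.filter (fun g : G => (g : ℂˣ × ℂˣ × ℂˣ).2.1 = 1)).card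
      + (Finset.univ.filter (fun g : G => (g : ℂˣ × ℂˣ × ℂˣ).2.2 = 1)).card
      = Fintype.card G + 2 := by
    rw [Finset.card_filter, Finset.card_filter, Finset.card_filter, Finset.card_filter,
      ← Finset.sum_add_distrib, ← Finset.sum_add_distrib, ← Finset.sum_add_distrib]
    rw [Finset.sum_congr rfl (fun g _ => hclass g)]
    rw [Finset.sum_add_distrib, Finset.sum_const, smul_eq_mul, mul_one]
    rw [Finset.sum_ite_eq' Finset.univ (1 : G) (fun _ => 2)]
    simp [Finset.card_univ]
  -- counting identity (B) : pairing via inversion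
  have h21 : Fintype.card {g : G // AgeK (g : ℂˣ × ℂˣ × ℂˣ) 2}
      = Fintype.card {g : G // AgeK (g : ℂˣ × ℂˣ × ℂˣ) 1} := by
    exact Fintype.card_congr
      { toFun := fun x => ⟨x.1⁻¹, by
          have h := ageK_inv (m := 2) (Or.inr rfl) x.2
          norm_num at h
          simpa using h⟩
        invFun := fun x => ⟨x.1⁻¹, by
          have h := ageK_inv (m := 1) (Or.inl rfl) x.2
          norm_num at h
          simpa using h⟩
        left_inv := fun x => Subtype.ext (by simp)
        right_inv := fun x => Subtype.ext (by simp) }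
  have hdisj : Disjoint
      (Finset.univ.filter (fun g : G => AgeK (g : ℂˣ × ℂˣ × ℂˣ) 1))
      (Finset.univ.filter (fun g : G => AgeK (g : ℂˣ × ℂˣ × ℂˣ) 2)) := by
    rw [Finset.disjoint_left]
    intro g hg1 hg2
    rw [Finset.mem_filter] at hg1 hg2
    exact ageK_not_both hg1.2 hg2.2
  have hB : (Finset.univ.filter
        (fun g : G => AgeK (g : ℂˣ × ℂˣ × ℂˣ) 1 ∨ AgeK (g : ℂˣ × ℂˣ × ℂˣ) 2)).card
      = 2 * (Finset.univ.filter (fun g : G => AgeK (g : ℂˣ × ℂˣ × ℂˣ) 1)).card := by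
    rw [Finset.filter_or, Finset.card_union_of_disjoint hdisj]
    have e2 : (Finset.univ.filter (fun g : G => AgeK (g : ℂˣ × ℂˣ × ℂˣ) 2)).card
        = (Finset.univ.filter (fun g : G => AgeK (g : ℂˣ × ℂˣ × ℂˣ) 1)).card := by
      rw [← Fintype.card_subtype, ← Fintype.card_subtype]
      exact h21
    omega
  -- translate all `Nat.card`s into filter cards
  have eG : Nat.card G = Fintype.card G := Nat.card_eq_fintype_card
  have eJ : Nat.card {g : G // ∃ k : Fin 3 → ℕ,
      (∀ i, k i < orderOf (g : ℂˣ × ℂˣ × ℂˣ)) ∧ (∀ i, k i ≠ 0) ∧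
      k 0 + k 1 + k 2 = orderOf (g : ℂˣ × ℂˣ × ℂˣ) ∧
      (((g : ℂˣ × ℂˣ × ℂˣ).1 : ℂ) =
        Complex.exp (2 * (Real.pi : ℂ) * Complex.I *
          ((k 0 : ℂ) / (orderOf (g : ℂˣ × ℂˣ × ℂˣ) : ℂ)))) ∧
      (((g : ℂˣ × ℂˣ × ℂˣ).2.1 : ℂ) =
        Complex.exp (2 * (Real.pi : ℂ) * Complex.I *
          ((k 1 : ℂ) / (orderOf (g : ℂˣ × ℂˣ × ℂˣ) : ℂ)))) ∧
      (((g : ℂˣ × ℂˣ × ℂˣ).2.2 : ℂ) =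
        Complex.exp (2 * (Real.pi : ℂ) * Complex.I *
          ((k 2 : ℂ) / (orderOf (g : ℂˣ × ℂˣ × ℂˣ) : ℂ))))}
      = (Finset.univ.filter (fun g : G => AgeK (g : ℂˣ × ℂˣ × ℂˣ) 1)).card := by
    rw [Nat.card_congr (Equiv.subtypeEquivRight hpred), Nat.card_eq_fintype_card,
      Fintype.card_subtype]
  have e1 : Nat.card {g : G // (g : ℂˣ × ℂˣ × ℂˣ).1 = 1}
      = (Finset.univ.filter (fun g : G => (g : ℂˣ × ℂˣ × ℂˣ).1 = 1)).card := by
    rw [Nat.card_eq_fintype_card, Fintype.card_subtype]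
  have e2 : Nat.card {g : G // (g : ℂˣ × ℂˣ × ℂˣ).2.1 = 1}
      = (Finset.univ.filter (fun g : G => (g : ℂˣ × ℂˣ × ℂˣ).2.1 = 1)).card := by
    rw [Nat.card_eq_fintype_card, Fintype.card_subtype]
  have e3 : Nat.card {g : G // (g : ℂˣ × ℂˣ × ℂˣ).2.2 = 1}
      = (Finset.univ.filter (fun g : G => (g : ℂˣ × ℂˣ × ℂˣ).2.2 = 1)).card := by
    rw [Nat.card_eq_fintype_card, Fintype.card_subtype]
  rw [eG, e1, e2, e3]
  rw [eJ]
  clear hpred hdet' horder hcoe1 h12 h13 h23 hclass hdisj h21 hdet hpow ha eG eJ e1 e2 e3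
  omega

end
end

section
/- Let r ≥ 2 and let a₁, …, a_r be integers with aᵢ ≥ 2 for all i. In the polynomial ring ℂ[x₁,…,x_r], let I be the ideal generated by the monomials xᵢxⱼ for 1 ≤ i < j ≤ r together with the binomials aᵢxᵢ^{aᵢ} − aⱼxⱼ^{aⱼ} for 1 ≤ i < j ≤ r. Then the quotient ℂ-algebra A := ℂ[x₁,…,x_r]/I is finite-dimensional over ℂ of dimension 2 + Σᵢ₌₁^r (aᵢ − 1), and the residue classes of the elements 1, xᵢ^j (for 1 ≤ i ≤ r, 1 ≤ j ≤ aᵢ − 1) and a₁x₁^{a₁} form a ℂ-basis of A. In particular, in A one has xᵢ^{aᵢ+1} = 0 for every i. -/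
open MvPolynomial

noncomputable section

def cuspIdeal (r : ℕ) (a : Fin r → ℕ) : Ideal (MvPolynomial (Fin r) ℂ) :=
  Ideal.span
    ({p | ∃ i j : Fin r, i < j ∧ p = X i * X j} ∪
     {p | ∃ i j : Fin r, i < j ∧
        p = C ((a i : ℕ) : ℂ) * X i ^ a i - C ((a j : ℕ) : ℂ) * X j ^ a j})

def cuspBasisFamily (r : ℕ) (hr : 2 ≤ r) (a : Fin r → ℕ) :
    (Unit ⊕ ((Σ i : Fin r, Fin (a i - 1)) ⊕ Unit)) →
      MvPolynomial (Fin r) ℂ ⧸ cuspIdeal r a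
  | Sum.inl _ => 1
  | Sum.inr (Sum.inl ⟨i, j⟩) => Ideal.Quotient.mk _ (X i ^ ((j : ℕ) + 1))
  | Sum.inr (Sum.inr _) =>
      Ideal.Quotient.mk _
        (C ((a ⟨0, by omega⟩ : ℕ) : ℂ) * X (⟨0, by omega⟩ : Fin r) ^ a ⟨0, by omega⟩)

/-
Modulo `I`, a monomial involving two variables is divisible by some `xᵢxⱼ` and vanishes; a pure
power `xᵢ^c` is a member of the family for `c < aᵢ`, equals `aᵢ⁻¹ a₁x₁^{a₁}` for `c = aᵢ`, and
vanishes for `c > aᵢ` because `aᵢxᵢ^{aᵢ+1} ≡ xᵢ · aⱼxⱼ^{aⱼ} ∈ (xᵢxⱼ)`. So the family spans. For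
independence, the dual functionals are written down on monomials (the coefficient of `1`, of
`xᵢ^j`, and `Σₖ aₖ⁻¹ · [coefficient of xₖ^{aₖ}]`); they kill `I`, hence descend to `A`, where they
are dual to the family.
-/

theorem Finsupp.exists_eq_single_or_exists_ne {σ M : Type*} [Zero M] [Nonempty σ] (m : σ →₀ M) :
    (∃ i c, m = Finsupp.single i c) ∨ ∃ i j, i ≠ j ∧ m i ≠ 0 ∧ m j ≠ 0 := by
  rcases le_or_gt (m.support.card) 1 with h | h
  · exact .inl (Finsupp.card_support_le_one'.mp h)
  · obtain ⟨i, hi, j, hj, hij⟩ := Finset.one_lt_card.mp h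
    exact .inr ⟨i, j, hij, Finsupp.mem_support_iff.mp hi, Finsupp.mem_support_iff.mp hj⟩

theorem Ideal.restrictScalars_span_le_ker {K A V : Type*} [CommRing K] [CommRing A] [Algebra K A]
    [AddCommGroup V] [Module K V] (ψ : A →ₗ[K] V) (S : Set A)
    (hS : ∀ s ∈ S, ψ ∘ₗ LinearMap.mulRight K s = 0) :
    (Ideal.span S).restrictScalars K ≤ LinearMap.ker ψ := by
  intro q hq
  suffices ∀ p, ψ (p * q) = 0 by simpa using this 1
  induction hq using Submodule.span_induction with
  | mem s hs => exact fun p => LinearMap.congr_fun (hS s hs) p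
  | zero => simp
  | add x y _ _ hx hy => intro p; rw [mul_add, map_add, hx, hy, add_zero]
  | smul c x _ hx => intro p; rw [smul_eq_mul, ← mul_assoc]; exact hx _

theorem Finsupp.ne_single_of_apply_ne_zero {σ : Type*} {n : σ →₀ ℕ} {i j : σ} (hij : i ≠ j)
    (hi : n i ≠ 0) (hj : n j ≠ 0) (k : σ) (d : ℕ) : n ≠ Finsupp.single k d := by
  rintro rfl
  rw [Finsupp.single_apply_ne_zero] at hi hj
  exact hij (hi.1.trans hj.1.symm)

theorem Finsupp.add_single_eq_single_iff {σ : Type*} {a : σ → ℕ} {m : σ →₀ ℕ} {i : σ}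
    (hi : a i ≠ 0) (k : σ) :
    m + Finsupp.single i (a i) = Finsupp.single k (a k) ↔ k = i ∧ m = 0 := by
  constructor
  · intro h
    obtain rfl : k = i := by
      by_contra hki
      have := congrArg (· i) h
      simp [hki] at this
      exact hi this.2
    exact ⟨rfl, by simpa using h⟩
  · rintro ⟨rfl, rfl⟩
    exact zero_add _

theorem constr_basisMonomials_monomial {σ R V : Type*} [CommRing R] [AddCommGroup V] [Module R V]
    (w : (σ →₀ ℕ) → V) (n : σ →₀ ℕ) (c : R) :
    (basisMonomials σ R).constr R w (monomial n c) = c • w n := by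
  rw [show monomial n c = c • monomial n 1 by rw [smul_monomial, smul_eq_mul, mul_one], map_smul]
  exact congrArg (c • ·) ((basisMonomials σ R).constr_basis R w n)

variable {r : ℕ} {a : Fin r → ℕ}

theorem X_mul_X_mem_cuspIdeal {i j : Fin r} (hij : i ≠ j) : X i * X j ∈ cuspIdeal r a := by
  rcases hij.lt_or_gt with h | h
  · exact Ideal.subset_span (.inl ⟨i, j, h, rfl⟩)
  · rw [mul_comm]
    exact Ideal.subset_span (.inl ⟨j, i, h, rfl⟩)

theorem C_mul_X_pow_sub_mem_cuspIdeal (i j : Fin r) :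
    C (a i : ℂ) * X i ^ a i - C (a j : ℂ) * X j ^ a j ∈ cuspIdeal r a := by
  rcases lt_trichotomy i j with h | rfl | h
  · exact Ideal.subset_span (.inr ⟨i, j, h, rfl⟩)
  · simp
  · rw [← neg_sub]
    exact neg_mem (Ideal.subset_span (.inr ⟨j, i, h, rfl⟩))

theorem X_pow_succ_mem_cuspIdeal (hr : 2 ≤ r) (ha : ∀ i, 0 < a i) (i : Fin r) :
    X i ^ (a i + 1) ∈ cuspIdeal r a := by
  obtain ⟨j, hij⟩ : ∃ j : Fin r, i ≠ j := by
    by_cases hi : (i : ℕ) = 0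
    · exact ⟨⟨1, hr⟩, fun h => by simp [h] at hi⟩
    · exact ⟨⟨0, by omega⟩, fun h => hi (by simp [h])⟩
  obtain ⟨n, hn⟩ : ∃ n, a j = n + 1 := Nat.exists_eq_add_one.mpr (ha j)
  have hinv : (C (a i : ℂ)⁻¹ * C (a i : ℂ) : MvPolynomial (Fin r) ℂ) = 1 := by
    rw [← C_mul, inv_mul_cancel₀ (by exact_mod_cast (ha i).ne'), C_1]
  have key : X i ^ (a i + 1) = C (a i : ℂ)⁻¹ *
      (X i * (C (a i : ℂ) * X i ^ a i - C (a j : ℂ) * X j ^ a j) +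
        C (a j : ℂ) * X j ^ n * (X i * X j)) := by
    rw [hn]
    linear_combination (-(X i ^ (a i + 1) : MvPolynomial (Fin r) ℂ)) * hinv
  rw [key]
  exact Ideal.mul_mem_left _ _ <| add_mem
    (Ideal.mul_mem_left _ _ (C_mul_X_pow_sub_mem_cuspIdeal i j))
    (Ideal.mul_mem_left _ _ (X_mul_X_mem_cuspIdeal hij))

theorem monomial_mem_cuspIdeal {m : Fin r →₀ ℕ} {i j : Fin r} (hij : i ≠ j) (hi : m i ≠ 0)
    (hj : m j ≠ 0) (c : ℂ) : monomial m c ∈ cuspIdeal r a := by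
  refine Ideal.mem_of_dvd _ ?_ (X_mul_X_mem_cuspIdeal hij)
  rw [X, X, monomial_mul, monomial_dvd_monomial]
  refine ⟨.inr fun k => ?_, by simp⟩
  simp only [Finsupp.add_apply, Finsupp.single_apply]
  split_ifs <;> subst_vars <;> omega

theorem mk_X_pow_mem_span (hr : 2 ≤ r) (ha : ∀ i, 0 < a i) (i : Fin r) (c : ℕ) :
    Ideal.Quotient.mk _ (X i ^ c) ∈ Submodule.span ℂ (Set.range (cuspBasisFamily r hr a)) := by
  rcases lt_trichotomy c (a i) with hc | rfl | hc
  · rcases Nat.eq_zero_or_pos c with rfl | hc0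
    · rw [pow_zero, map_one]
      exact Submodule.subset_span ⟨.inl (), rfl⟩
    · obtain ⟨d, rfl⟩ := Nat.exists_eq_add_one.mpr hc0
      exact Submodule.subset_span ⟨.inr (.inl ⟨i, ⟨d, by omega⟩⟩), rfl⟩
  · have h : cuspBasisFamily r hr a (.inr (.inr ())) =
        (a i : ℂ) • Ideal.Quotient.mk _ (X i ^ a i) := by
      rw [← Ideal.Quotient.mkₐ_eq_mk ℂ, ← map_smul, Ideal.Quotient.mkₐ_eq_mk, smul_eq_C_mul,
        cuspBasisFamily, Ideal.Quotient.eq]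
      exact C_mul_X_pow_sub_mem_cuspIdeal _ _
    have hai : (a i : ℂ) ≠ 0 := by exact_mod_cast (ha i).ne'
    rw [← inv_smul_smul₀ hai (Ideal.Quotient.mk _ _), ← h]
    exact Submodule.smul_mem _ _ (Submodule.subset_span ⟨_, rfl⟩)
  · rw [← Nat.sub_add_cancel hc, pow_add, Ideal.Quotient.eq_zero_iff_mem.mpr
      (Ideal.mul_mem_left _ _ (X_pow_succ_mem_cuspIdeal hr ha i))]
    exact zero_mem _

theorem span_cuspBasisFamily (hr : 2 ≤ r) (ha : ∀ i, 0 < a i) :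
    Submodule.span ℂ (Set.range (cuspBasisFamily r hr a)) = ⊤ := by
  have : Nonempty (Fin r) := ⟨⟨0, by omega⟩⟩
  rw [eq_top_iff]
  rintro x -
  obtain ⟨p, rfl⟩ := Ideal.Quotient.mk_surjective x
  induction p using MvPolynomial.induction_on' with
  | monomial m c =>
    rcases Finsupp.exists_eq_single_or_exists_ne m with ⟨i, d, rfl⟩ | ⟨i, j, hij, hi, hj⟩
    · rw [show monomial (Finsupp.single i d) c = c • X i ^ d by
          rw [X_pow_eq_monomial, smul_monomial, smul_eq_mul, mul_one],
        ← Ideal.Quotient.mkₐ_eq_mk ℂ, map_smul]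
      exact Submodule.smul_mem _ _ (mk_X_pow_mem_span hr ha i d)
    · rw [Ideal.Quotient.eq_zero_iff_mem.mpr (monomial_mem_cuspIdeal hij hi hj c)]
      exact zero_mem _
  | add p q hp hq => rw [map_add]; exact add_mem hp hq

-- A weight `w` prescribes the values of a linear map on the monomials; the two conditions say that
-- this map kills `xᵢxⱼ · ℂ[x]` and `(aᵢxᵢ^{aᵢ} − aⱼxⱼ^{aⱼ}) · ℂ[x]`.
structure IsCuspWeight {V : Type*} [AddCommGroup V] [Module ℂ V] (a : Fin r → ℕ)
    (w : (Fin r →₀ ℕ) → V) : Prop where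
  mixed : ∀ m i j, i ≠ j → w (m + Finsupp.single i 1 + Finsupp.single j 1) = 0
  balanced : ∀ m i j, (a i : ℂ) • w (m + Finsupp.single i (a i)) =
    (a j : ℂ) • w (m + Finsupp.single j (a j))

namespace IsCuspWeight

variable {V : Type*} [AddCommGroup V] [Module ℂ V] {w : (Fin r →₀ ℕ) → V}

theorem cuspIdeal_le_ker (hw : IsCuspWeight a w) :
    (cuspIdeal r a).restrictScalars ℂ ≤ LinearMap.ker ((basisMonomials (Fin r) ℂ).constr ℂ w) := by
  refine Ideal.restrictScalars_span_le_ker _ _ ?_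
  rintro _ (⟨i, j, hij, rfl⟩ | ⟨i, j, -, rfl⟩) <;>
    refine (basisMonomials (Fin r) ℂ).ext fun m => ?_
  · simp [X, monomial_mul, constr_basisMonomials_monomial, ← add_assoc, hw.mixed m i j hij.ne]
  · rw [C_mul_X_pow_eq_monomial, C_mul_X_pow_eq_monomial]
    simp [mul_sub, monomial_mul, constr_basisMonomials_monomial, hw.balanced m i j]

def lift (hw : IsCuspWeight a w) : (MvPolynomial (Fin r) ℂ ⧸ cuspIdeal r a) →ₗ[ℂ] V :=
  ((cuspIdeal r a).restrictScalars ℂ).liftQ _ hw.cuspIdeal_le_ker ∘ₗ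
    (Submodule.Quotient.restrictScalarsEquiv ℂ (cuspIdeal r a)).symm.toLinearMap

theorem lift_mk_monomial (hw : IsCuspWeight a w) (n : Fin r →₀ ℕ) (c : ℂ) :
    hw.lift (Ideal.Quotient.mk _ (monomial n c)) = c • w n :=
  constr_basisMonomials_monomial w n c

end IsCuspWeight

abbrev cuspIndex (r : ℕ) (a : Fin r → ℕ) : Type :=
  Unit ⊕ ((Σ i : Fin r, Fin (a i - 1)) ⊕ Unit)

-- `cuspCoord a n` is the coordinate vector of the class of `xⁿ` in the basis `cuspBasisFamily`.
def cuspCoord (a : Fin r → ℕ) (n : Fin r →₀ ℕ) : cuspIndex r a → ℂ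
  | .inl _ => if n = 0 then 1 else 0
  | .inr (.inl ⟨i, j⟩) => if n = Finsupp.single i ((j : ℕ) + 1) then 1 else 0
  | .inr (.inr _) => ∑ k, if n = Finsupp.single k (a k) then (a k : ℂ)⁻¹ else 0

theorem isCuspWeight_cuspCoord (ha : ∀ i, 0 < a i) : IsCuspWeight a (cuspCoord a) := by
  constructor
  · intro m i j hij
    have hne := Finsupp.ne_single_of_apply_ne_zero
      (n := m + Finsupp.single i 1 + Finsupp.single j 1) hij (by simp) (by simp)
    funext b
    rcases b with _ | ⟨⟨k, l⟩ | _⟩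
    · simp [cuspCoord]
    · simp only [cuspCoord, hne, if_false, Pi.zero_apply]
    · simp [cuspCoord, hne]
  · intro m i j
    suffices h : ∀ i, (a i : ℂ) • cuspCoord a (m + Finsupp.single i (a i)) =
        Pi.single (.inr (.inr ())) (if m = 0 then 1 else 0) by rw [h, h]
    intro i
    have hai : a i ≠ 0 := (ha i).ne'
    funext b
    rcases b with _ | ⟨⟨k, l⟩ | _⟩
    · simp [cuspCoord, hai]
    · have hne : m + Finsupp.single i (a i) ≠ Finsupp.single k ((l : ℕ) + 1) := by
        intro h
        have := congrArg (· i) h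
        rcases eq_or_ne k i with rfl | hki
        · simp at this; omega
        · simp [hki] at this; omega
      simp [cuspCoord, -Finsupp.single_add, hne]
    · simp only [Pi.smul_apply, cuspCoord, Finsupp.add_single_eq_single_iff hai]
      by_cases hm : m = 0 <;> simp [hm, hai]

theorem lift_cuspCoord_cuspBasisFamily (hr : 2 ≤ r) (ha : ∀ i, 0 < a i) (b : cuspIndex r a) :
    (isCuspWeight_cuspCoord ha).lift (cuspBasisFamily r hr a b) = Pi.single b 1 := by
  have ha' i : a i ≠ 0 := (ha i).ne'
  funext b'
  rcases b with _ | ⟨⟨i, j⟩ | _⟩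
  · rw [cuspBasisFamily, ← map_one (Ideal.Quotient.mk _), ← C_1, ← monomial_zero',
      IsCuspWeight.lift_mk_monomial]
    rcases b' with _ | ⟨⟨k, l⟩ | _⟩ <;>
      simp [cuspCoord, eq_comm (a := (0 : Fin r →₀ ℕ)), -Finsupp.single_add, ha']
  · have hj : (j : ℕ) + 1 ≠ a i := by have := j.isLt; omega
    rw [cuspBasisFamily, X_pow_eq_monomial, IsCuspWeight.lift_mk_monomial]
    rcases b' with _ | ⟨⟨k, l⟩ | _⟩
    · simp [cuspCoord]
    · rcases eq_or_ne i k with rfl | hik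
      · simp [cuspCoord, -Finsupp.single_add, Finsupp.single_eq_single_iff, Pi.single_apply,
          Fin.val_inj, eq_comm (a := l)]
      · simp [cuspCoord, -Finsupp.single_add, Finsupp.single_eq_single_iff, hik, Ne.symm hik]
    · simp [cuspCoord, -Finsupp.single_add, Finsupp.single_eq_single_iff, ite_and, hj]
  · rw [cuspBasisFamily, C_mul_X_pow_eq_monomial, IsCuspWeight.lift_mk_monomial]
    rcases b' with _ | ⟨⟨k, l⟩ | _⟩
    · simp [cuspCoord, ha']
    · have := l.isLt
      simp [cuspCoord, -Finsupp.single_add, Finsupp.single_eq_single_iff]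
      rintro rfl
      omega
    · simp [cuspCoord, Finsupp.single_eq_single_iff, ite_and, ha']

theorem linearIndependent_cuspBasisFamily (hr : 2 ≤ r) (ha : ∀ i, 0 < a i) :
    LinearIndependent ℂ (cuspBasisFamily r hr a) := by
  refine LinearIndependent.of_comp (isCuspWeight_cuspCoord ha).lift ?_
  have h : (isCuspWeight_cuspCoord ha).lift ∘ cuspBasisFamily r hr a = Pi.basisFun ℂ _ :=
    funext fun b => (lift_cuspCoord_cuspBasisFamily hr ha b).trans (Pi.basisFun_apply ℂ _ b).symm
  rw [h]
  exact (Pi.basisFun ℂ _).linearIndependent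

/-- The quotient `A = ℂ[x₁,…,x_r]/(xᵢxⱼ, aᵢxᵢ^{aᵢ} − aⱼxⱼ^{aⱼ})_{i<j}` is a finite-dimensional
`ℂ`-algebra of dimension `2 + Σᵢ (aᵢ − 1)`; the residue classes of `1`, `xᵢ^j`
(`1 ≤ j ≤ aᵢ − 1`) and `a₁x₁^{a₁}` form a `ℂ`-basis; and `xᵢ^{aᵢ+1} = 0` in `A`. -/
theorem cusp_limit_algebra (r : ℕ) (hr : 2 ≤ r) (a : Fin r → ℕ) (ha : ∀ i, 2 ≤ a i) :
    FiniteDimensional ℂ (MvPolynomial (Fin r) ℂ ⧸ cuspIdeal r a) ∧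
    Module.finrank ℂ (MvPolynomial (Fin r) ℂ ⧸ cuspIdeal r a) = 2 + ∑ i, (a i - 1) ∧
    LinearIndependent ℂ (cuspBasisFamily r hr a) ∧
    Submodule.span ℂ (Set.range (cuspBasisFamily r hr a)) = ⊤ ∧
    ∀ i : Fin r, Ideal.Quotient.mk (cuspIdeal r a) (X i ^ (a i + 1)) = 0 := by
  have hpos i : 0 < a i := by have := ha i; omega
  have hli := linearIndependent_cuspBasisFamily hr hpos
  have hsp := span_cuspBasisFamily hr hpos
  let B := Module.Basis.mk hli hsp.ge
  refine ⟨B.finiteDimensional_of_finite, ?_, hli, hsp, fun i =>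
    Ideal.Quotient.eq_zero_iff_mem.mpr (X_pow_succ_mem_cuspIdeal hr hpos i)⟩
  rw [Module.finrank_eq_card_basis B]
  simp only [Fintype.card_sum, Fintype.card_sigma, Fintype.card_fin, Fintype.card_unit]
  omega
end
end
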